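/- Let X be an N × L real matrix containing the L × L identity as the submatrix on some row set J, whose columns w₁,…,w_L thus satisfy: whenever some w_i is NOT a standard basis vector of ℝ^N, then for I₁ = I₂ \ {i} ⊊ I₂ ⊆ {1,…,L}, the sum of squares of the maximal minors of the column-submatrix X^{I₁} is strictly less than that of X^{I₂}. -/

import Mathlib

open Matrix

/-- For an `N × L` real matrix `X` and a set `I` of column indices, the sum of the
squares of all maximal (`|I| × |I|`) minors of the column submatrix `X^I` of `X`. -/
noncomputable def colMinorSum {N L : ℕ} (X : Matrix (Fin N) (Fin L) ℝ)
    (I : Finset (Fin L)) : ℝ :=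
  ∑ J ∈ (Finset.univ.powersetCard I.card : Finset (Finset (Fin N))).attach,
    (Matrix.det (fun a b : Fin I.card =>
      X (J.1.orderIsoOfFin (Finset.mem_powersetCard.mp J.2).2 a)
        (I.orderIsoOfFin rfl b))) ^ 2

namespace Stmt17Aux

/-- Helper: the squared minor on rows `J`, columns `I` (of size `k`), as a total function. -/
noncomputable def dd {N L : ℕ} (X : Matrix (Fin N) (Fin L) ℝ) (k : ℕ)
    (I : Finset (Fin L)) (hI : I.card = k) (J : Finset (Fin N)) : ℝ :=
  if h : J.card = k then
    (Matrix.det (fun a b : Fin k =>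
      X (J.orderEmbOfFin h a) (I.orderEmbOfFin hI b))) ^ 2
  else 0

lemma dd_nonneg {N L : ℕ} (X : Matrix (Fin N) (Fin L) ℝ) (k : ℕ)
    (I : Finset (Fin L)) (hI : I.card = k) (J : Finset (Fin N)) :
    0 ≤ dd X k I hI J := by
  unfold dd; split_ifs
  · exact sq_nonneg _
  · exact le_refl 0

lemma colMinorSum_eq {N L : ℕ} (X : Matrix (Fin N) (Fin L) ℝ) (k : ℕ)
    (I : Finset (Fin L)) (hI : I.card = k) :
    colMinorSum X I = ∑ J ∈ (Finset.univ.powersetCard k : Finset (Finset (Fin N))),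
      dd X k I hI J := by
  subst hI
  rw [colMinorSum, ← Finset.sum_attach
    (Finset.univ.powersetCard I.card : Finset (Finset (Fin N))) (dd X I.card I rfl)]
  refine Finset.sum_congr rfl fun J _ => ?_
  rw [dd, dif_pos (Finset.mem_powersetCard.mp J.2).2]
  simp only [Finset.coe_orderIsoOfFin_apply]

lemma exists_pos {N : Type*} [LinearOrder N] (s : Finset N) {k : ℕ} (h : s.card = k)
    {x : N} (hx : x ∈ s) : ∃ r : Fin k, s.orderEmbOfFin h r = x := by
  refine ⟨(s.orderIsoOfFin h).symm ⟨x, hx⟩, ?_⟩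
  rw [← Finset.coe_orderIsoOfFin_apply]
  simp

lemma vanish {N L : ℕ} (X : Matrix (Fin N) (Fin L) ℝ) (g : Fin L → Fin N)
    (hX : ∀ a b, X (g a) b = if a = b then (1:ℝ) else 0)
    {n : ℕ} {I₁ : Finset (Fin L)} {i : Fin L} (hiI : i ∉ I₁) (h1 : I₁.card = n)
    {J : Finset (Fin N)} (hJ : J.card = n) (hgi : g i ∈ J) :
    Matrix.det (fun a b : Fin n =>
      X (J.orderEmbOfFin hJ a) (I₁.orderEmbOfFin h1 b)) = 0 := by
  obtain ⟨r, hr⟩ := exists_pos J hJ hgi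
  apply Matrix.det_eq_zero_of_row_eq_zero r
  intro b
  show X (J.orderEmbOfFin hJ r) (I₁.orderEmbOfFin h1 b) = 0
  rw [hr, hX, if_neg]
  intro h
  exact hiI (by rw [h]; exact Finset.orderEmbOfFin_mem _ _ _)

lemma cof {N L : ℕ} (X : Matrix (Fin N) (Fin L) ℝ) (g : Fin L → Fin N)
    (hX : ∀ a b, X (g a) b = if a = b then (1:ℝ) else 0)
    {n : ℕ} {I₂ : Finset (Fin L)} {i : Fin L} (hi : i ∈ I₂) (h2 : I₂.card = n+1)
    (he : (I₂.erase i).card = n)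
    {J : Finset (Fin N)} (hJ : J.card = n) (hgi : g i ∉ J)
    (hK : (insert (g i) J).card = n+1) :
    (Matrix.det (fun a b : Fin (n+1) =>
        X ((insert (g i) J).orderEmbOfFin hK a) (I₂.orderEmbOfFin h2 b))) ^ 2
      = (Matrix.det (fun a b : Fin n =>
        X (J.orderEmbOfFin hJ a) ((I₂.erase i).orderEmbOfFin he b))) ^ 2 := by
  set K := insert (g i) J with hKdef
  set A : Matrix (Fin (n+1)) (Fin (n+1)) ℝ :=
    fun a b => X (K.orderEmbOfFin hK a) (I₂.orderEmbOfFin h2 b) with hA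
  obtain ⟨r, hr⟩ := exists_pos K hK (Finset.mem_insert_self (g i) J)
  obtain ⟨c, hc⟩ := exists_pos I₂ h2 hi
  have hrow : ∀ b, A r b = if b = c then (1:ℝ) else 0 := by
    intro b
    show X (K.orderEmbOfFin hK r) (I₂.orderEmbOfFin h2 b) = _
    rw [hr, hX]
    by_cases hbc : b = c
    · subst hbc
      rw [if_pos rfl, if_pos hc.symm]
    · rw [if_neg hbc, if_neg]
      intro h
      exact hbc ((I₂.orderEmbOfFin h2).injective (by rw [hc, ← h]))
  have hdet := Matrix.det_succ_row A r
  have hsum : Matrix.det A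
      = (-1:ℝ)^((r:ℕ)+(c:ℕ)) * Matrix.det (A.submatrix r.succAbove c.succAbove) := by
    rw [hdet, Finset.sum_eq_single c]
    · rw [hrow, if_pos rfl, mul_one]
    · intro j _ hj
      rw [hrow, if_neg hj, mul_zero, zero_mul]
    · intro h
      exact absurd (Finset.mem_univ c) h
  have hrowemb : (fun a : Fin n => (K.orderEmbOfFin hK) (r.succAbove a))
      = ⇑(J.orderEmbOfFin hJ) := by
    apply Finset.orderEmbOfFin_unique hJ
    · intro x
      have hmem := Finset.orderEmbOfFin_mem K hK (r.succAbove x)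
      have hne : K.orderEmbOfFin hK (r.succAbove x) ≠ g i := by
        rw [← hr]
        intro hcon
        exact (Fin.succAbove_ne r x) ((K.orderEmbOfFin hK).injective hcon)
      rcases Finset.mem_insert.mp hmem with h | h
      · exact absurd h hne
      · exact h
    · exact (K.orderEmbOfFin hK).strictMono.comp (Fin.strictMono_succAbove r)
  have hcolemb : (fun b : Fin n => (I₂.orderEmbOfFin h2) (c.succAbove b))
      = ⇑((I₂.erase i).orderEmbOfFin he) := by
    apply Finset.orderEmbOfFin_unique he
    · intro x
      refine Finset.mem_erase.mpr ⟨?_, Finset.orderEmbOfFin_mem _ _ _⟩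
      rw [← hc]
      intro hcon
      exact (Fin.succAbove_ne c x) ((I₂.orderEmbOfFin h2).injective hcon)
    · exact (I₂.orderEmbOfFin h2).strictMono.comp (Fin.strictMono_succAbove c)
  have hsub : A.submatrix r.succAbove c.succAbove
      = fun a b : Fin n =>
          X (J.orderEmbOfFin hJ a) ((I₂.erase i).orderEmbOfFin he b) := by
    funext a b
    show X (K.orderEmbOfFin hK (r.succAbove a)) (I₂.orderEmbOfFin h2 (c.succAbove b)) = _
    rw [congrFun hrowemb a, congrFun hcolemb b]
  rw [hsum, hsub, mul_pow, ← pow_mul, mul_comm ((r:ℕ)+(c:ℕ)) 2, pow_mul,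
    neg_one_sq, one_pow, one_mul]

lemma nonzero {N L n : ℕ} (X : Matrix (Fin N) (Fin L) ℝ) (g : Fin L → Fin N)
    (hX : ∀ a b, X (g a) b = if a = b then (1:ℝ) else 0)
    {I₂ : Finset (Fin L)} {i : Fin L} (hi : i ∈ I₂) (h2 : I₂.card = n+1)
    {m : Fin N} (hmi : X m i ≠ 0) (hmg : ∀ j, m ≠ g j)
    (hJc : (insert m ((I₂.erase i).image g)).card = n+1) :
    Matrix.det (fun a b : Fin (n+1) =>
      X ((insert m ((I₂.erase i).image g)).orderEmbOfFin hJc a)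
        (I₂.orderEmbOfFin h2 b)) ≠ 0 := by
  set J₀ := insert m ((I₂.erase i).image g) with hJ₀
  set A : Matrix (Fin (n+1)) (Fin (n+1)) ℝ :=
    fun a b => X (J₀.orderEmbOfFin hJc a) (I₂.orderEmbOfFin h2 b) with hA
  have hli : LinearIndependent ℝ (fun a => A a) := by
    rw [Fintype.linearIndependent_iff]
    intro cs hsum
    obtain ⟨am, ham⟩ := exists_pos J₀ hJc (Finset.mem_insert_self m _)
    obtain ⟨c, hc⟩ := exists_pos I₂ h2 hi
    have key : ∀ a : Fin (n+1), a ≠ am → ∃ j ∈ I₂.erase i, J₀.orderEmbOfFin hJc a = g j := by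
      intro a ha
      have hmem := Finset.orderEmbOfFin_mem J₀ hJc a
      rcases Finset.mem_insert.mp hmem with h | h
      · exact absurd ((J₀.orderEmbOfFin hJc).injective (h.trans ham.symm)) ha
      · obtain ⟨j, hj, hjg⟩ := Finset.mem_image.mp h
        exact ⟨j, hj, hjg.symm⟩
    have hsum' : ∀ b : Fin (n+1), ∑ a, cs a * A a b = 0 := by
      intro b
      have := congrFun hsum b
      simpa using this
    have hcm : cs am = 0 := by
      have h0 := hsum' c
      rw [Finset.sum_eq_single am] at h0
      · have hAc : A am c = X m i := by
          show X (J₀.orderEmbOfFin hJc am) (I₂.orderEmbOfFin h2 c) = X m i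
          rw [ham, hc]
        rw [hAc] at h0
        exact (mul_eq_zero.mp h0).resolve_right hmi
      · intro a _ ha
        obtain ⟨j, hj, hjg⟩ := key a ha
        have hAa : A a c = 0 := by
          show X (J₀.orderEmbOfFin hJc a) (I₂.orderEmbOfFin h2 c) = 0
          rw [hjg, hc, hX, if_neg (Finset.ne_of_mem_erase hj)]
        rw [hAa, mul_zero]
      · intro h
        exact absurd (Finset.mem_univ am) h
    intro a
    rcases eq_or_ne a am with rfl | ha
    · exact hcm
    · obtain ⟨j, hj, hjg⟩ := key a ha
      obtain ⟨bj, hbj⟩ := exists_pos I₂ h2 (Finset.mem_of_mem_erase hj)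
      have h0 := hsum' bj
      rw [Finset.sum_eq_single a] at h0
      · have hAa : A a bj = 1 := by
          show X (J₀.orderEmbOfFin hJc a) (I₂.orderEmbOfFin h2 bj) = 1
          rw [hjg, hbj, hX, if_pos rfl]
        rw [hAa, mul_one] at h0
        exact h0
      · intro a' _ ha'
        rcases eq_or_ne a' am with rfl | ham'
        · rw [hcm, zero_mul]
        · obtain ⟨j', hj', hjg'⟩ := key a' ham'
          have hAa' : A a' bj = 0 := by
            show X (J₀.orderEmbOfFin hJc a') (I₂.orderEmbOfFin h2 bj) = 0
            rw [hjg', hbj, hX, if_neg]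
            intro hjj
            apply ha'
            apply (J₀.orderEmbOfFin hJc).injective
            rw [hjg, hjg', hjj]
          rw [hAa', mul_zero]
      · intro h
        exact absurd (Finset.mem_univ a) h
  have hunit : IsUnit A := Matrix.linearIndependent_rows_iff_isUnit.mp hli
  exact ((Matrix.isUnit_iff_isUnit_det A).mp hunit).ne_zero

end Stmt17Aux

open Stmt17Aux in
/-- Let `X` be an `N × L` real matrix containing the `L × L` identity as
the submatrix on the rows indexed by an injective `g : Fin L → Fin N`.  If the `i`-th
column of `X` is NOT a standard basis vector of `ℝ^N`, then for every `I₂ ⊆ {1, …, L}`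
containing `i` and `I₁ = I₂ \ {i}`, the sum of squares of the maximal minors of the
column submatrix `X^{I₁}` is strictly less than that of `X^{I₂}`. -/
theorem stmt17 {N L : ℕ} (hL : 2 ≤ L) (hNL : L < N)
    (X : Matrix (Fin N) (Fin L) ℝ)
    (g : Fin L → Fin N) (hg : Function.Injective g)
    (hid : X.submatrix g id = (1 : Matrix (Fin L) (Fin L) ℝ))
    (i : Fin L)
    (hstd : ¬ ∃ n : Fin N, ∀ m : Fin N, X m i = if m = n then 1 else 0)
    (I₂ : Finset (Fin L)) (hi : i ∈ I₂) :
    colMinorSum X (I₂.erase i) < colMinorSum X I₂ := by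
  have hX : ∀ a b, X (g a) b = if a = b then (1:ℝ) else 0 := by
    intro a b
    have := congrFun (congrFun hid a) b
    simpa [Matrix.one_apply] using this
  push_neg at hstd
  obtain ⟨m, hm⟩ := hstd (g i)
  have hmgi : m ≠ g i := by
    rintro rfl
    apply hm
    rw [hX i i, if_pos rfl, if_pos rfl]
  have hmi : X m i ≠ 0 := by rwa [if_neg hmgi] at hm
  have hmg : ∀ j, m ≠ g j := by
    intro j h
    rcases eq_or_ne j i with rfl | hji
    · exact hmgi h
    · exact hmi (by rw [h, hX, if_neg hji])
  have hI₂pos : 0 < I₂.card := Finset.card_pos.mpr ⟨i, hi⟩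
  set n := (I₂.erase i).card with hn
  have h2 : I₂.card = n + 1 := by
    rw [hn, Finset.card_erase_of_mem hi]; omega
  have he : (I₂.erase i).card = n := hn.symm
  rw [colMinorSum_eq X n (I₂.erase i) he, colMinorSum_eq X (n+1) I₂ h2]
  set T := (Finset.univ.powersetCard n : Finset (Finset (Fin N))).filter
    (fun J => g i ∉ J) with hT
  have step1 : ∑ J ∈ (Finset.univ.powersetCard n : Finset (Finset (Fin N))),
      dd X n (I₂.erase i) he J = ∑ J ∈ T, dd X n (I₂.erase i) he J := by
    refine (Finset.sum_filter_of_ne ?_).symm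
    intro J hJ hne
    intro hgi
    apply hne
    rw [dd, dif_pos (Finset.mem_powersetCard.mp hJ).2,
      vanish X g hX (Finset.notMem_erase i I₂) he (Finset.mem_powersetCard.mp hJ).2 hgi]
    norm_num
  have step2 : ∑ J ∈ T, dd X n (I₂.erase i) he J
      = ∑ J ∈ T, dd X (n+1) I₂ h2 (insert (g i) J) := by
    refine Finset.sum_congr rfl fun J hJ => ?_
    obtain ⟨hJP, hgi⟩ := Finset.mem_filter.mp hJ
    have hJc : J.card = n := (Finset.mem_powersetCard.mp hJP).2
    have hKc : (insert (g i) J).card = n + 1 := by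
      rw [Finset.card_insert_of_notMem hgi, hJc]
    rw [dd, dd, dif_pos hJc, dif_pos hKc]
    exact (cof X g hX hi h2 he hJc hgi hKc).symm
  have step3 : ∑ J ∈ T, dd X (n+1) I₂ h2 (insert (g i) J)
      = ∑ K ∈ T.image (insert (g i)), dd X (n+1) I₂ h2 K := by
    refine (Finset.sum_image ?_).symm
    intro x hx y hy hxy
    have hxg : g i ∉ x := (Finset.mem_filter.mp hx).2
    have hyg : g i ∉ y := (Finset.mem_filter.mp hy).2
    rw [← Finset.erase_insert hxg, ← Finset.erase_insert hyg, hxy]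
  set J₀ := insert m ((I₂.erase i).image g) with hJ₀
  have hmim : m ∉ (I₂.erase i).image g := by
    intro h
    obtain ⟨j, _, hjg⟩ := Finset.mem_image.mp h
    exact hmg j hjg.symm
  have hJ₀c : J₀.card = n + 1 := by
    rw [hJ₀, Finset.card_insert_of_notMem hmim,
      Finset.card_image_of_injective _ hg, he]
  have hgiJ₀ : g i ∉ J₀ := by
    rw [hJ₀]
    intro h
    rcases Finset.mem_insert.mp h with h | h
    · exact hmgi h.symm
    · obtain ⟨j, hj, hjg⟩ := Finset.mem_image.mp h
      exact Finset.ne_of_mem_erase hj (hg hjg)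
  have hJ₀U : J₀ ∉ T.image (insert (g i)) := by
    intro h
    obtain ⟨J, _, hJeq⟩ := Finset.mem_image.mp h
    exact hgiJ₀ (hJeq ▸ Finset.mem_insert_self (g i) J)
  have hJ₀P : J₀ ∈ (Finset.univ.powersetCard (n+1) : Finset (Finset (Fin N))) :=
    Finset.mem_powersetCard.mpr ⟨Finset.subset_univ _, hJ₀c⟩
  have hUsub : insert J₀ (T.image (insert (g i)))
      ⊆ (Finset.univ.powersetCard (n+1) : Finset (Finset (Fin N))) := by
    intro K hK
    rcases Finset.mem_insert.mp hK with rfl | hK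
    · exact hJ₀P
    · obtain ⟨J, hJ, rfl⟩ := Finset.mem_image.mp hK
      obtain ⟨hJP, hgi⟩ := Finset.mem_filter.mp hJ
      refine Finset.mem_powersetCard.mpr ⟨Finset.subset_univ _, ?_⟩
      rw [Finset.card_insert_of_notMem hgi, (Finset.mem_powersetCard.mp hJP).2]
  have hJ₀pos : 0 < dd X (n+1) I₂ h2 J₀ := by
    rw [dd, dif_pos hJ₀c]
    have hdet := nonzero X g hX hi h2 hmi hmg hJ₀c
    exact lt_of_le_of_ne (sq_nonneg _) (Ne.symm (pow_ne_zero _ hdet))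
  calc ∑ J ∈ (Finset.univ.powersetCard n : Finset (Finset (Fin N))),
        dd X n (I₂.erase i) he J
      = ∑ K ∈ T.image (insert (g i)), dd X (n+1) I₂ h2 K := by
        rw [step1, step2, step3]
    _ < dd X (n+1) I₂ h2 J₀ + ∑ K ∈ T.image (insert (g i)), dd X (n+1) I₂ h2 K := by
        linarith
    _ = ∑ K ∈ insert J₀ (T.image (insert (g i))), dd X (n+1) I₂ h2 K :=
        (Finset.sum_insert hJ₀U).symm
    _ ≤ ∑ J ∈ (Finset.univ.powersetCard (n+1) : Finset (Finset (Fin N))),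
        dd X (n+1) I₂ h2 J :=
        Finset.sum_le_sum_of_subset_of_nonneg hUsub fun K _ _ => dd_nonneg X _ I₂ h2 K
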